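/- With A¹, A², A³ the 6×6 matrices from the Maxwell system and c ∈ ℝ³ with |c| < 1, the matrix B = I + c_1 A¹ + c_2 A² + c_3 A³ is symmetric positive definite, with smallest eigenvalue 1 - |c|. -/

import Mathlib

/-!
Split `x ∈ ℝ⁶` as `x = (E, B)` with `E, B ∈ ℝ³`. The matrix acts as
`(E, B) ↦ (E + c × B, B - c × E)`, so its quadratic form is `|E|² + |B|² + 2 E · (c × B)`.
Cauchy–Schwarz together with `|c × B| ≤ |c| |B|` bounds the cross term by `|c| (|E|² + |B|²)`,
which gives the lower bound `1 - |c|` for the Rayleigh quotient. It is attained on `(|c| e, c × e)`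
for any `e ⊥ c`, because then `c × (c × e) = -|c|² e`.
-/

open Matrix

/-- The symbol matrices of the Maxwell-type system for the curvature two-form. -/
noncomputable def calA1 : Matrix (Fin 6) (Fin 6) ℝ :=
  !![0,0,0,0,0,0; 0,0,0,0,0,-1; 0,0,0,0,1,0; 0,0,0,0,0,0; 0,0,1,0,0,0; 0,-1,0,0,0,0]

noncomputable def calA2 : Matrix (Fin 6) (Fin 6) ℝ :=
  !![0,0,0,0,0,1; 0,0,0,0,0,0; 0,0,0,-1,0,0; 0,0,-1,0,0,0; 0,0,0,0,0,0; 1,0,0,0,0,0]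

noncomputable def calA3 : Matrix (Fin 6) (Fin 6) ℝ :=
  !![0,0,0,0,-1,0; 0,0,0,1,0,0; 0,0,0,0,0,0; 0,1,0,0,0,0; -1,0,0,0,0,0; 0,0,0,0,0,0]

section Append

variable {m n : ℕ}

lemma dotProduct_append {R : Type*} [NonUnitalNonAssocSemiring R] (u u' : Fin m → R)
    (v v' : Fin n → R) : Fin.append u v ⬝ᵥ Fin.append u' v' = u ⬝ᵥ u' + v ⬝ᵥ v' := by
  simp [dotProduct, Fin.sum_univ_add]

lemma smul_append {R α : Type*} [SMul R α] (a : R) (u : Fin m → α) (v : Fin n → α) :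
    a • Fin.append u v = Fin.append (a • u) (a • v) := by
  ext i
  refine Fin.addCases (fun j => ?_) (fun j => ?_) i <;> simp

lemma append_eq_vecCons {α : Type*} (u v : Fin 3 → α) :
    Fin.append u v = ![u 0, u 1, u 2, v 0, v 1, v 2] := by
  ext i; fin_cases i <;> rfl

end Append

section OrderedRing

variable {ι R : Type*} [Fintype ι] [CommRing R] [LinearOrder R] [IsStrictOrderedRing R]

lemma sq_dotProduct_le_mul (u v : ι → R) : (u ⬝ᵥ v) ^ 2 ≤ (u ⬝ᵥ u) * (v ⬝ᵥ v) := by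
  simpa only [dotProduct, sq] using Finset.sum_mul_sq_le_sq_mul_sq Finset.univ u v

lemma dotProduct_self_nonneg (u : ι → R) : 0 ≤ u ⬝ᵥ u :=
  Fintype.sum_nonneg fun _ => mul_self_nonneg _

lemma dotProduct_self_pos {u : ι → R} (hu : u ≠ 0) : 0 < u ⬝ᵥ u :=
  (dotProduct_self_nonneg u).lt_of_ne fun h => hu (dotProduct_self_eq_zero.1 h.symm)

lemma dotProduct_cross_self_le (c B : Fin 3 → R) :
    c ⨯₃ B ⬝ᵥ c ⨯₃ B ≤ (c ⬝ᵥ c) * (B ⬝ᵥ B) := by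
  rw [cross_dot_cross, dotProduct_comm B c]
  nlinarith [sq_nonneg (c ⬝ᵥ B)]

end OrderedRing

section RealMatrix

variable {n : Type*} [Fintype n] {A : Matrix n n ℝ} {m : ℝ}

lemma Matrix.PosDef.of_le_dotProduct_mulVec (hA : A.IsSymm) (hm : 0 < m)
    (h : ∀ x, m * (x ⬝ᵥ x) ≤ x ⬝ᵥ A *ᵥ x) : A.PosDef :=
  .of_dotProduct_mulVec_pos hA fun x hx => by
    simpa using (mul_pos hm (dotProduct_self_pos hx)).trans_le (h x)

lemma le_of_hasEigenvalue_of_le_dotProduct_mulVec (h : ∀ x, m * (x ⬝ᵥ x) ≤ x ⬝ᵥ A *ᵥ x) {μ : ℝ}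
    (hμ : Module.End.HasEigenvalue A.mulVecLin μ) : m ≤ μ := by
  obtain ⟨v, hv, hv0⟩ := hμ.exists_hasEigenvector
  have hAv : A *ᵥ v = μ • v := Module.End.mem_eigenspace_iff.1 hv
  have := h v
  rw [hAv, dotProduct_smul, smul_eq_mul] at this
  exact le_of_mul_le_mul_right this (dotProduct_self_pos hv0)

end RealMatrix

lemma two_mul_abs_dotProduct_cross_le (c E B : Fin 3 → ℝ) :
    2 * |E ⬝ᵥ c ⨯₃ B| ≤ √(c ⬝ᵥ c) * (E ⬝ᵥ E + B ⬝ᵥ B) := by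
  have hE := dotProduct_self_nonneg E
  have hB := dotProduct_self_nonneg B
  have hc := dotProduct_self_nonneg c
  rw [← abs_two, ← abs_mul]
  refine abs_le_of_sq_le_sq ?_ (by positivity)
  calc (2 * (E ⬝ᵥ c ⨯₃ B)) ^ 2 = 4 * (E ⬝ᵥ c ⨯₃ B) ^ 2 := by ring
    _ ≤ 4 * ((E ⬝ᵥ E) * ((c ⬝ᵥ c) * (B ⬝ᵥ B))) := by
      gcongr
      exact (sq_dotProduct_le_mul _ _).trans (by gcongr; exact dotProduct_cross_self_le c B)
    _ ≤ (c ⬝ᵥ c) * (E ⬝ᵥ E + B ⬝ᵥ B) ^ 2 := by nlinarith [sq_nonneg (E ⬝ᵥ E - B ⬝ᵥ B)]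
    _ = (√(c ⬝ᵥ c) * (E ⬝ᵥ E + B ⬝ᵥ B)) ^ 2 := by rw [mul_pow, Real.sq_sqrt hc]

noncomputable def maxwellMatrix (c : Fin 3 → ℝ) : Matrix (Fin 6) (Fin 6) ℝ :=
  1 + c 0 • calA1 + c 1 • calA2 + c 2 • calA3

lemma transpose_calA1 : calA1ᵀ = calA1 := by
  ext i j; fin_cases i <;> fin_cases j <;> rfl

lemma transpose_calA2 : calA2ᵀ = calA2 := by
  ext i j; fin_cases i <;> fin_cases j <;> rfl

lemma transpose_calA3 : calA3ᵀ = calA3 := by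
  ext i j; fin_cases i <;> fin_cases j <;> rfl

lemma maxwellMatrix_isSymm (c : Fin 3 → ℝ) : (maxwellMatrix c).IsSymm := by
  simp only [maxwellMatrix, IsSymm, transpose_add, transpose_smul, transpose_one, transpose_calA1,
    transpose_calA2, transpose_calA3]

lemma maxwellMatrix_mulVec_append (c E B : Fin 3 → ℝ) :
    maxwellMatrix c *ᵥ Fin.append E B = Fin.append (E + c ⨯₃ B) (B - c ⨯₃ E) := by
  rw [append_eq_vecCons, append_eq_vecCons]
  ext i
  fin_cases i <;>
    simp only [maxwellMatrix, calA1, calA2, calA3, mulVec, dotProduct, Fin.sum_univ_six,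
      Matrix.add_apply, Matrix.smul_apply, one_apply, of_apply, cons_val', cons_val,
      cons_val_fin_one, cons_val_zero, cons_val_one, Fin.isValue, Fin.reduceFinMk, Fin.reduceEq,
      ↓reduceIte, cross_apply, Pi.add_apply, Pi.sub_apply, smul_eq_mul] <;> ring

lemma dotProduct_maxwellMatrix_mulVec_append (c E B : Fin 3 → ℝ) :
    Fin.append E B ⬝ᵥ maxwellMatrix c *ᵥ Fin.append E B =
      E ⬝ᵥ E + B ⬝ᵥ B + 2 * (E ⬝ᵥ c ⨯₃ B) := by
  have h : B ⬝ᵥ c ⨯₃ E = -(E ⬝ᵥ c ⨯₃ B) := by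
    rw [triple_product_permutation B, triple_product_permutation E, ← cross_anticomm B E,
      dotProduct_neg]
  rw [maxwellMatrix_mulVec_append, dotProduct_append, dotProduct_add, dotProduct_sub, h]
  ring

lemma le_dotProduct_maxwellMatrix_mulVec (c : Fin 3 → ℝ) (x : Fin 6 → ℝ) :
    (1 - √(c ⬝ᵥ c)) * (x ⬝ᵥ x) ≤ x ⬝ᵥ maxwellMatrix c *ᵥ x := by
  obtain ⟨E, B, rfl⟩ : ∃ E B : Fin 3 → ℝ, Fin.append E B = x := ⟨_, _, Fin.append_castAdd_natAdd⟩
  rw [dotProduct_maxwellMatrix_mulVec_append, dotProduct_append]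
  nlinarith [two_mul_abs_dotProduct_cross_le c E B, neg_abs_le (E ⬝ᵥ c ⨯₃ B)]

lemma maxwellMatrix_mulVec_eigenvector (c e : Fin 3 → ℝ) (he : e ⬝ᵥ c = 0) :
    maxwellMatrix c *ᵥ Fin.append (√(c ⬝ᵥ c) • e) (c ⨯₃ e) =
      (1 - √(c ⬝ᵥ c)) • Fin.append (√(c ⬝ᵥ c) • e) (c ⨯₃ e) := by
  set s := √(c ⬝ᵥ c)
  have hs : c ⬝ᵥ c = s * s := (Real.mul_self_sqrt (dotProduct_self_nonneg c)).symm
  rw [maxwellMatrix_mulVec_append, smul_append, cross_cross_eq_smul_sub_smul', dotProduct_comm c e,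
    he, hs, map_smul]
  congr 1 <;> module

lemma hasEigenvalue_maxwellMatrix (c : Fin 3 → ℝ) :
    Module.End.HasEigenvalue (maxwellMatrix c).mulVecLin (1 - √(c ⬝ᵥ c)) := by
  by_cases hc : c = 0
  · subst hc
    refine Module.End.hasEigenvalue_of_hasEigenvector (x := Pi.single 0 1) ⟨?_, by simp⟩
    simp [maxwellMatrix]
  obtain ⟨e, he0, he⟩ := exists_ne_zero_dotProduct_eq_zero c
  refine Module.End.hasEigenvalue_of_hasEigenvector
    ⟨Module.End.mem_eigenspace_iff.2 (maxwellMatrix_mulVec_eigenvector c e he), fun h => ?_⟩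
  have hs : √(c ⬝ᵥ c) ≠ 0 := by
    rw [Real.sqrt_ne_zero']
    exact dotProduct_self_pos hc
  exact he0 (smul_right_injective _ hs (funext fun i => by simpa using congrFun h (Fin.castAdd 3 i)))

/-- If `|c| < 1` then `B = I + c₁A¹ + c₂A² + c₃A³` is symmetric positive definite
with smallest eigenvalue `1 - |c|`. -/
theorem stmt_4 (c : Fin 3 → ℝ) (hc : Real.sqrt (∑ i, c i ^ 2) < 1) :
    ((1 : Matrix (Fin 6) (Fin 6) ℝ) + c 0 • calA1 + c 1 • calA2 + c 2 • calA3).IsSymm ∧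
    ((1 : Matrix (Fin 6) (Fin 6) ℝ) + c 0 • calA1 + c 1 • calA2 + c 2 • calA3).PosDef ∧
    Module.End.HasEigenvalue
      ((1 : Matrix (Fin 6) (Fin 6) ℝ) + c 0 • calA1 + c 1 • calA2 + c 2 • calA3).mulVecLin
      (1 - Real.sqrt (∑ i, c i ^ 2)) ∧
    ∀ μ : ℝ,
      Module.End.HasEigenvalue
        ((1 : Matrix (Fin 6) (Fin 6) ℝ) + c 0 • calA1 + c 1 • calA2 + c 2 • calA3).mulVecLin μ →
      1 - Real.sqrt (∑ i, c i ^ 2) ≤ μ := by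
  have hnorm : ∑ i, c i ^ 2 = c ⬝ᵥ c := by simp only [dotProduct, sq]
  rw [hnorm] at hc ⊢
  exact ⟨maxwellMatrix_isSymm c,
    .of_le_dotProduct_mulVec (maxwellMatrix_isSymm c) (by linarith)
      (le_dotProduct_maxwellMatrix_mulVec c),
    hasEigenvalue_maxwellMatrix c,
    fun _ => le_of_hasEigenvalue_of_le_dotProduct_mulVec (le_dotProduct_maxwellMatrix_mulVec c)⟩
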